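/- The coefficients of the spectral polynomial of the periodic discrete Toda lattice are subtraction-free: there exist polynomials p_0, p_1, …, p_g in the 2(g+1) variables I_1,…,I_{g+1}, V_1,…,V_{g+1} with nonnegative integer coefficients such that for all complex I_1,…,I_{g+1}, V_1,…,V_{g+1}, all x ∈ ℂ, and all y ≠ 0: y·det(x·𝟙 + L(I;V)) = y² + y·(x^{g+1} + Σ_{k=0}^{g} p_k(I,V)·x^k) + Π_{i=1}^{g+1} I_i V_i. -/

import Mathlib

/-- The Lax matrix `L(I;V)` of the periodic discrete Toda lattice (0-indexed:
row/column `i : Fin (g+1)` corresponds to the 1-indexed `i+1`).  Its entries are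
`L_{ii} = I_{i+1} + V_i` (cyclically, so the last diagonal entry is
`I_1 + V_{g+1}`), `L_{i,i+1} = 1`, `L_{i+1,i} = I_{i+1} V_{i+1}`,
`L_{1,g+1} = (-1)^g I_1 V_1 / y`, `L_{g+1,1} = (-1)^g y`,
all other entries `0`. -/
noncomputable def todaLax (g : ℕ) (I V : Fin (g + 1) → ℂ) (y : ℂ) :
    Matrix (Fin (g + 1)) (Fin (g + 1)) ℂ :=
  Matrix.of fun i j =>
    (if j = i then I (i + 1) + V i else 0)
    + (if (i : ℕ) + 1 = (j : ℕ) then 1 else 0)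
    + (if (j : ℕ) + 1 = (i : ℕ) then I i * V i else 0)
    + (if (i : ℕ) = 0 ∧ (j : ℕ) = g then (-1) ^ g * I 0 * V 0 / y else 0)
    + (if (i : ℕ) = g ∧ (j : ℕ) = 0 then (-1) ^ g * y else 0)

/-!
Expanding the determinant along the two corner entries gives
`y det(x + L) = y² + y Q + ∏ Iᵢ Vᵢ` with `Q = D_{g+1} - I₁ V₁ D'`, where `D_m` is the leading
`m × m` minor of the open tridiagonal part (a continuant with diagonal `x + V_k + I_{k+1}` and
off-diagonal products `I_{k+1} V_{k+1}`, indices mod `g + 1`) and `D'` is the minor on rows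
`2, …, g`. Writing `D_m = S_m + I_{m+1} D_{m-1}` turns the continuant recursion into the
subtraction-free recursion `S_{m+1} = (x + V_{m+1}) S_m + x I_{m+1} D_{m-1}`, and
`Q = S_{g+1} + I₁ D_g|_{V₁ = 0}` since `D_g` is affine in `V₁` with slope `D'`. Hence `Q` is a
polynomial with coefficients in `ℕ`, monic of degree `g + 1` in `x`.
-/

open Finset Matrix Polynomial Fin

variable {R : Type*}

section Continuant

variable [CommRing R]

def continuant (d c : ℕ → R) : ℕ → R
  | 0 => 1
  | 1 => d 0
  | m + 2 => d (m + 1) * continuant d c (m + 1) - c m * continuant d c m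

@[simp] theorem continuant_zero (d c : ℕ → R) : continuant d c 0 = 1 := rfl

@[simp] theorem continuant_one (d c : ℕ → R) : continuant d c 1 = d 0 := rfl

theorem continuant_add_two (d c : ℕ → R) (m : ℕ) :
    continuant d c (m + 2) = d (m + 1) * continuant d c (m + 1) - c m * continuant d c m := rfl

theorem continuant_update_zero (d c : ℕ → R) (e : R) (m : ℕ) :
    continuant (Function.update d 0 e) c (m + 1) =
      continuant d c (m + 1) +
        (e - d 0) * continuant (fun k => d (k + 1)) (fun k => c (k + 1)) m := by
  induction m using Nat.twoStepInduction with
  | zero => simp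
  | one => simp [continuant_add_two]; ring
  | more m ih₀ ih₁ =>
    rw [continuant_add_two _ c (m + 1), ih₀, ih₁, continuant_add_two d c (m + 1),
      continuant_add_two (fun k => d (k + 1)) _ m, Function.update_of_ne (by omega)]
    ring

end Continuant

namespace Matrix

variable [CommRing R]

theorem det_succ_row_eq_of_forall_ne_eq_zero {n : ℕ} (M : Matrix (Fin (n + 1)) (Fin (n + 1)) R)
    (i j : Fin (n + 1)) (h : ∀ k ≠ j, M i k = 0) :
    M.det = (-1) ^ (i + j : ℕ) * M i j * (M.submatrix i.succAbove j.succAbove).det := by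
  rw [det_succ_row M i, Fintype.sum_eq_single j fun k hk => by rw [h k hk, mul_zero, zero_mul]]

theorem det_succ_column_eq_of_forall_ne_eq_zero {n : ℕ}
    (M : Matrix (Fin (n + 1)) (Fin (n + 1)) R) (i j : Fin (n + 1)) (h : ∀ k ≠ i, M k j = 0) :
    M.det = (-1) ^ (i + j : ℕ) * M i j * (M.submatrix i.succAbove j.succAbove).det := by
  rw [det_succ_column M j, Fintype.sum_eq_single i fun k hk => by rw [h k hk, mul_zero, zero_mul]]

theorem det_updateRow_single {n : ℕ} (M : Matrix (Fin (n + 1)) (Fin (n + 1)) R)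
    (i j : Fin (n + 1)) (c : R) :
    (M.updateRow i (Pi.single j c)).det =
      (-1) ^ (i + j : ℕ) * c * (M.submatrix i.succAbove j.succAbove).det := by
  rw [det_succ_row_eq_of_forall_ne_eq_zero _ i j fun k hk => by simp [hk],
    submatrix_updateRow_succAbove, updateRow_self, Pi.single_eq_same]

theorem det_add_single {n : ℕ} (M : Matrix (Fin (n + 1)) (Fin (n + 1)) R)
    (i j : Fin (n + 1)) (c : R) :
    (M + single i j c).det =
      M.det + (-1) ^ (i + j : ℕ) * c * (M.submatrix i.succAbove j.succAbove).det := by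
  have hrow : M + single i j c = M.updateRow i (M i + Pi.single j c) := by
    ext i' j'
    by_cases hi : i' = i
    · subst hi; simp [single_apply, Pi.single_apply, eq_comm]
    · simp [hi, Ne.symm hi]
  rw [hrow, det_updateRow_add, updateRow_eq_self, det_updateRow_single]

def tridiagonal (d u l : ℕ → R) (n : ℕ) : Matrix (Fin n) (Fin n) R :=
  of fun i j =>
    if (i : ℕ) = j then d i
    else if (i : ℕ) + 1 = j then u i
    else if (j : ℕ) + 1 = i then l j else 0

variable (d u l : ℕ → R)

theorem tridiagonal_apply_of_val_add_one_eq {n : ℕ} {i j : Fin n} (h : (i : ℕ) + 1 = j) :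
    tridiagonal d u l n i j = u i := by
  simp only [tridiagonal, of_apply]
  rw [if_neg (by omega), if_pos h]

theorem tridiagonal_apply_of_val_eq_add_one {n : ℕ} {i j : Fin n} (h : (i : ℕ) = j + 1) :
    tridiagonal d u l n i j = l j := by
  simp only [tridiagonal, of_apply]
  rw [if_neg (by omega), if_neg (by omega), if_pos h.symm]

theorem tridiagonal_apply_of_lt_or_lt {n : ℕ} {i j : Fin n}
    (h : (i : ℕ) + 1 < j ∨ (j : ℕ) + 1 < i) : tridiagonal d u l n i j = 0 := by
  simp only [tridiagonal, of_apply]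
  rw [if_neg (by omega), if_neg (by omega), if_neg (by omega)]

theorem tridiagonal_submatrix_of_val {m n : ℕ} (f g : Fin m → Fin n)
    (hf : ∀ i, (f i : ℕ) = i) (hg : ∀ j, (g j : ℕ) = j) :
    (tridiagonal d u l n).submatrix f g = tridiagonal d u l m := by
  ext i j
  simp [tridiagonal, hf, hg]

theorem tridiagonal_submatrix_of_val_succ {m n : ℕ} (f g : Fin m → Fin n)
    (hf : ∀ i, (f i : ℕ) = i + 1) (hg : ∀ j, (g j : ℕ) = j + 1) :
    (tridiagonal d u l n).submatrix f g =
      tridiagonal (fun k => d (k + 1)) (fun k => u (k + 1)) (fun k => l (k + 1)) m := by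
  ext i j
  simp [tridiagonal, hf, hg]

theorem det_tridiagonal_add_two (n : ℕ) :
    (tridiagonal d u l (n + 2)).det =
      d (n + 1) * (tridiagonal d u l (n + 1)).det - l n * u n * (tridiagonal d u l n).det := by
  have hrow : tridiagonal d u l (n + 2) (last (n + 1)) =
      Pi.single (last (n + 1)) (d (n + 1)) + Pi.single (last n).castSucc (l n) := by
    ext j
    simp only [tridiagonal, of_apply, Pi.add_apply, Pi.single_apply, Fin.ext_iff, val_last,
      val_castSucc]
    split_ifs <;> first | omega | simp_all
  have hminor : ((tridiagonal d u l (n + 2)).submatrix castSucc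
      (last n).castSucc.succAbove).det = u n * (tridiagonal d u l n).det := by
    rw [det_succ_column_eq_of_forall_ne_eq_zero _ (last n) (last n) fun k hk => ?_]
    · rw [submatrix_submatrix, succAbove_last, tridiagonal_submatrix_of_val d u l
        (castSucc ∘ castSucc) _ (fun _ => rfl) fun j => ?_]
      · simp [tridiagonal_apply_of_val_add_one_eq]
      · simp [succAbove_castSucc_of_lt _ _ (castSucc_lt_last j)]
    · have hk : (k : ℕ) ≠ n := fun h => hk (Fin.ext h)
      refine tridiagonal_apply_of_lt_or_lt d u l (Or.inl ?_)
      simp only [succAbove_castSucc_self, val_castSucc, val_succ, val_last]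
      omega
  rw [← updateRow_eq_self (tridiagonal d u l (n + 2)) (last (n + 1)), hrow, det_updateRow_add,
    det_updateRow_single, det_updateRow_single, succAbove_last,
    tridiagonal_submatrix_of_val d u l castSucc castSucc (fun _ => rfl) (fun _ => rfl), hminor,
    val_last, val_castSucc, val_last,
    (Even.neg_one_pow ⟨n + 1, rfl⟩ : (-1 : R) ^ (n + 1 + (n + 1)) = 1),
    (Odd.neg_one_pow ⟨n, by ring⟩ : (-1 : R) ^ (n + 1 + n) = -1)]
  ring

theorem det_tridiagonal (n : ℕ) : (tridiagonal d u l n).det = continuant d (u * l) n := by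
  induction n using Nat.twoStepInduction with
  | zero => simp
  | one => simp [tridiagonal]
  | more n ih₀ ih₁ =>
    rw [det_tridiagonal_add_two, ih₀, ih₁, continuant_add_two, Pi.mul_apply]
    ring

theorem det_tridiagonal_add_single_add_single (n : ℕ) (a b : R) :
    (tridiagonal d u l (n + 2) + single 0 (last (n + 1)) a + single (last (n + 1)) 0 b).det =
      continuant d (u * l) (n + 2) -
        a * b * continuant (fun k => d (k + 1)) (fun k => u (k + 1) * l (k + 1)) n +
        (-1) ^ (n + 1) * (a * ∏ k ∈ range (n + 1), l k + b * ∏ k ∈ range (n + 1), u k) := by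
  have hlow : ((tridiagonal d u l (n + 2)).submatrix castSucc succ).det =
      ∏ k ∈ range (n + 1), u k := by
    rw [det_of_isLowerTriangular _ fun i j hij => ?_, ← prod_univ_eq_prod_range]
    · exact prod_congr rfl fun i _ => tridiagonal_apply_of_val_add_one_eq d u l rfl
    · exact tridiagonal_apply_of_lt_or_lt d u l (Or.inl (by simpa using hij))
  have hup : ((tridiagonal d u l (n + 2)).submatrix succ castSucc).det =
      ∏ k ∈ range (n + 1), l k := by
    rw [det_of_isUpperTriangular fun i j hij => ?_, ← prod_univ_eq_prod_range]
    · exact prod_congr rfl fun i _ => tridiagonal_apply_of_val_eq_add_one d u l rfl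
    · exact tridiagonal_apply_of_lt_or_lt d u l (Or.inr (by simpa using hij))
  have hcorner : (tridiagonal d u l (n + 2) + single (last (n + 1)) 0 b).submatrix succ castSucc =
      (tridiagonal d u l (n + 2)).submatrix succ castSucc + single (last n) 0 b := by
    ext i j
    simp [single_apply, Fin.ext_iff]
  have hsign : (-1 : R) ^ (n + 1) * (-1) ^ n = -1 := by
    rw [← pow_add]
    exact Odd.neg_one_pow ⟨n, by ring⟩
  rw [add_right_comm, det_add_single, det_add_single]
  simp only [succAbove_zero, succAbove_last]
  rw [hcorner, det_add_single, hlow, hup, submatrix_submatrix]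
  simp only [succAbove_zero, succAbove_last]
  rw [tridiagonal_submatrix_of_val_succ d u l _ _ (fun _ => rfl) (fun _ => rfl), det_tridiagonal,
    det_tridiagonal]
  simp only [val_zero, val_last, zero_add, add_zero]
  linear_combination
    (a * b * continuant (fun k => d (k + 1)) (fun k => u (k + 1) * l (k + 1)) n) * hsign

end Matrix

section SplitContinuant

/-- `(S m, D (m - 1))` with `D (-1) = 0`, where `D` is the continuant with diagonal
`x + a k + b (k + 1)` and off-diagonal products `b (k + 1) * a (k + 1)`, and
`S m = D m - b m * D (m - 1)`. -/
def splitContinuant [CommSemiring R] (x : R) (a b : ℕ → R) : ℕ → R × R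
  | 0 => (1, 0)
  | m + 1 =>
    ((x + a m) * (splitContinuant x a b m).1 + x * b m * (splitContinuant x a b m).2,
      (splitContinuant x a b m).1 + b m * (splitContinuant x a b m).2)

theorem map_splitContinuant {S : Type*} [CommSemiring R] [CommSemiring S] (f : R →+* S) (x : R)
    (a b : ℕ → R) (m : ℕ) :
    Prod.map f f (splitContinuant x a b m) =
      splitContinuant (f x) (fun k => f (a k)) (fun k => f (b k)) m := by
  induction m with
  | zero => simp [splitContinuant]
  | succ m ih =>
    simp only [splitContinuant, Prod.map, map_add, map_mul]
    rw [← ih]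
    rfl

variable [CommRing R] (x : R) (a b : ℕ → R)

theorem snd_splitContinuant_succ (m : ℕ) :
    (splitContinuant x a b (m + 1)).2 =
      continuant (fun k => x + a k + b (k + 1)) (fun k => b (k + 1) * a (k + 1)) m := by
  induction m using Nat.twoStepInduction with
  | zero => simp [splitContinuant]
  | one => simp [splitContinuant]
  | more m ih₀ ih₁ =>
    rw [continuant_add_two, ← ih₀, ← ih₁]
    simp only [splitContinuant]
    ring

theorem fst_splitContinuant_add_mul_snd_update (n : ℕ) :
    (splitContinuant x a b (n + 2)).1 +
        b (n + 2) * (splitContinuant x (Function.update a 0 0) b (n + 2)).2 =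
      continuant (fun k => x + a k + b (k + 1)) (fun k => b (k + 1) * a (k + 1)) (n + 2) -
        b (n + 2) * a 0 *
          continuant (fun k => x + a (k + 1) + b (k + 2)) (fun k => b (k + 2) * a (k + 2)) n := by
  have hdiag : (fun k => x + Function.update a 0 0 k + b (k + 1)) =
      Function.update (fun k => x + a k + b (k + 1)) 0 (x + b 1) := by
    funext k
    rcases k with _ | k <;> simp
  have hoff : (fun k => b (k + 1) * Function.update a 0 0 (k + 1)) =
      fun k => b (k + 1) * a (k + 1) := by
    funext k
    simp
  rw [← snd_splitContinuant_succ, snd_splitContinuant_succ _ (Function.update a 0 0), hdiag, hoff,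
    continuant_update_zero, ← snd_splitContinuant_succ]
  simp only [splitContinuant]
  ring

end SplitContinuant

theorem isMonicOfDegree_splitContinuant [CommSemiring R] [Nontrivial R] (α β : ℕ → R) (m : ℕ) :
    (splitContinuant X (fun k => C (α k)) (fun k => C (β k)) (m + 1)).1.IsMonicOfDegree (m + 1) ∧
      (splitContinuant X (fun k => C (α k)) (fun k => C (β k)) (m + 1)).2.natDegree ≤ m := by
  induction m with
  | zero =>
    simp only [splitContinuant, mul_one, mul_zero, add_zero]
    exact ⟨isMonicOfDegree_X_add_one _, by simp⟩
  | succ m ih =>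
    obtain ⟨hS, hD⟩ := ih
    set S := (splitContinuant X (fun k => C (α k)) (fun k => C (β k)) (m + 1)).1
    set D := (splitContinuant X (fun k => C (α k)) (fun k => C (β k)) (m + 1)).2
    have hCD := (natDegree_C_mul_le (β (m + 1)) D).trans hD
    refine ⟨?_, ?_⟩
    · have hX : (X : R[X]).natDegree ≤ 1 := natDegree_X_le
      have hlow : (X * C (β (m + 1)) * D).natDegree < 1 + (m + 1) := by
        rw [mul_assoc]
        calc (X * (C (β (m + 1)) * D)).natDegree
            ≤ (X : R[X]).natDegree + (C (β (m + 1)) * D).natDegree := natDegree_mul_le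
          _ < 1 + (m + 1) := by omega
      have h := ((isMonicOfDegree_X_add_one (α (m + 1))).mul hS).add_right hlow
      rwa [add_comm 1] at h
    · calc (S + C (β (m + 1)) * D).natDegree ≤ max S.natDegree (C (β (m + 1)) * D).natDegree :=
            natDegree_add_le _ _
        _ ≤ m + 1 := max_le hS.natDegree_eq.le (by omega)

theorem Polynomial.IsMonicOfDegree.eval₂_eq {S : Type*} [Semiring R] [Semiring S] {p : R[X]}
    {N : ℕ} (hp : p.IsMonicOfDegree N) (f : R →+* S) (x : S) :
    p.eval₂ f x = x ^ N + ∑ k : Fin N, f (p.coeff k) * x ^ (k : ℕ) := by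
  have hN : p.coeff N = 1 := hp.natDegree_eq ▸ hp.monic.coeff_natDegree
  rw [eval₂_eq_sum_range' f (n := N + 1) (by rw [hp.natDegree_eq]; omega), sum_range_succ, hN,
    map_one, one_mul, add_comm, Fin.sum_univ_eq_sum_range (fun k => f (p.coeff k) * x ^ k)]

section Toda

open Fin.NatCast

noncomputable def todaSpectralPoly (N : ℕ) [NeZero N] : (MvPolynomial (Fin N ⊕ Fin N) ℕ)[X] :=
  let I : ℕ → MvPolynomial (Fin N ⊕ Fin N) ℕ := fun k => .X (.inl k)
  let V : ℕ → MvPolynomial (Fin N ⊕ Fin N) ℕ := fun k => .X (.inr k)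
  (splitContinuant X (fun k => C (V k)) (fun k => C (I k)) N).1 +
    C (I 0) * (splitContinuant X (fun k => C (Function.update V 0 0 k)) (fun k => C (I k)) N).2

theorem isMonicOfDegree_todaSpectralPoly (n : ℕ) :
    (todaSpectralPoly (n + 1)).IsMonicOfDegree (n + 1) := by
  let V : ℕ → MvPolynomial (Fin (n + 1) ⊕ Fin (n + 1)) ℕ := fun k => .X (.inr k)
  let I : ℕ → MvPolynomial (Fin (n + 1) ⊕ Fin (n + 1)) ℕ := fun k => .X (.inl k)
  obtain ⟨hS, -⟩ := isMonicOfDegree_splitContinuant V I n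
  obtain ⟨-, hD⟩ := isMonicOfDegree_splitContinuant (Function.update V 0 0) I n
  exact hS.add_right ((natDegree_C_mul_le _ _).trans_lt (hD.trans_lt n.lt_succ_self))

theorem eval₂_todaSpectralPoly (n : ℕ) (I V : Fin (n + 2) → ℂ) (x : ℂ) :
    (todaSpectralPoly (n + 2)).eval₂ (MvPolynomial.aeval (R := ℕ) (Sum.elim I V)).toRingHom x =
      continuant (fun k => x + V k + I (k + 1 : ℕ)) (fun k => I (k + 1 : ℕ) * V (k + 1 : ℕ))
          (n + 2) -
        I 0 * V 0 * continuant (fun k => x + V (k + 1 : ℕ) + I (k + 2 : ℕ))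
          (fun k => I (k + 2 : ℕ) * V (k + 2 : ℕ)) n := by
  set φ := eval₂RingHom (MvPolynomial.aeval (R := ℕ) (Sum.elim I V)).toRingHom x
  set V' : ℕ → MvPolynomial (Fin (n + 2) ⊕ Fin (n + 2)) ℕ := fun k => .X (.inr k)
  set I' : ℕ → MvPolynomial (Fin (n + 2) ⊕ Fin (n + 2)) ℕ := fun k => .X (.inl k)
  have hV₀ : (fun k => φ (C (Function.update V' 0 0 k))) =
      Function.update (fun k : ℕ => V k) 0 0 := by
    funext k
    rcases eq_or_ne k 0 with rfl | hk <;> simp [*, φ, V']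
  have h₁ := congrArg Prod.fst
    (map_splitContinuant φ X (fun k => C (V' k)) (fun k => C (I' k)) (n + 2))
  have h₂ := congrArg Prod.snd
    (map_splitContinuant φ X (fun k => C (Function.update V' 0 0 k)) (fun k => C (I' k)) (n + 2))
  rw [hV₀] at h₂
  simp only [Prod.map_fst, Prod.map_snd, φ, coe_eval₂RingHom, eval₂_X, eval₂_C, V', I',
    AlgHom.toRingHom_eq_coe, RingHom.coe_coe, MvPolynomial.aeval_X, Sum.elim_inr, Sum.elim_inl]
    at h₁ h₂
  have hI₀ : MvPolynomial.aeval (Sum.elim I V) (I' 0) = (fun k : ℕ => I k) (n + 2) := by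
    simp [I']
  rw [todaSpectralPoly, AlgHom.toRingHom_eq_coe, eval₂_add, eval₂_mul, eval₂_C, h₁, h₂,
    RingHom.coe_coe, hI₀, fst_splitContinuant_add_mul_snd_update]
  simp

theorem smul_one_add_todaLax (n : ℕ) (I V : Fin (n + 2) → ℂ) (x y : ℂ) :
    x • (1 : Matrix (Fin (n + 2)) (Fin (n + 2)) ℂ) + todaLax (n + 1) I V y =
      tridiagonal (fun k => x + V k + I (k + 1 : ℕ)) 1 (fun k => I (k + 1 : ℕ) * V (k + 1 : ℕ))
          (n + 2) +
        single 0 (last (n + 1)) ((-1) ^ (n + 1) * I 0 * V 0 / y) +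
        single (last (n + 1)) 0 ((-1) ^ (n + 1) * y) := by
  ext i j
  have hval : ∀ k : Fin (n + 2), (((k : ℕ) + 1 : ℕ) : Fin (n + 2)) = k + 1 := by simp
  simp only [Matrix.add_apply, Matrix.smul_apply, one_apply, todaLax, tridiagonal, single_apply,
    of_apply, Pi.one_apply, smul_eq_mul, Fin.ext_iff, val_zero, val_last, hval,
    Fin.cast_val_eq_self]
  split_ifs <;> first
    | omega
    | ring1
    | rw [← hval j, ‹(j : ℕ) + 1 = i›, Fin.cast_val_eq_self]; ring

theorem det_smul_one_add_todaLax (n : ℕ) (I V : Fin (n + 2) → ℂ) (x : ℂ) {y : ℂ} (hy : y ≠ 0) :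
    (x • (1 : Matrix (Fin (n + 2)) (Fin (n + 2)) ℂ) + todaLax (n + 1) I V y).det =
      continuant (fun k => x + V k + I (k + 1 : ℕ)) (fun k => I (k + 1 : ℕ) * V (k + 1 : ℕ))
          (n + 2) -
        I 0 * V 0 * continuant (fun k => x + V (k + 1 : ℕ) + I (k + 2 : ℕ))
          (fun k => I (k + 2 : ℕ) * V (k + 2 : ℕ)) n + y + (∏ i, I i * V i) / y := by
  have hprod :
      I 0 * V 0 * ∏ k ∈ range (n + 1), I (k + 1 : ℕ) * V (k + 1 : ℕ) = ∏ i, I i * V i := by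
    rw [Fin.prod_univ_succ, ← Fin.prod_univ_eq_prod_range]
    simp
  have hsign : ((-1 : ℂ) ^ (n + 1)) ^ 2 = 1 := by
    rw [← pow_mul, mul_comm, pow_mul, neg_one_sq, one_pow]
  rw [smul_one_add_todaLax, det_tridiagonal_add_single_add_single, ← hprod]
  simp only [one_mul, Pi.one_apply, prod_const_one, mul_one]
  field_simp
  rw [hsign]
  ring

end Toda

/-- The coefficients of the spectral polynomial of the periodic discrete Toda
lattice are subtraction-free: they are given by polynomials with nonnegative
integer (i.e. `ℕ`) coefficients in the variables `I_1, …, I_{g+1}, V_1, …, V_{g+1}`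
(encoded as `Sum.inl i ↦ I_i`, `Sum.inr i ↦ V_i`). -/
theorem todaLax_spectral_coefficients_subtraction_free (g : ℕ) (hg : 1 ≤ g) :
    ∃ p : Fin (g + 1) → MvPolynomial (Fin (g + 1) ⊕ Fin (g + 1)) ℕ,
      ∀ (I V : Fin (g + 1) → ℂ) (x y : ℂ), y ≠ 0 →
        y * (x • (1 : Matrix (Fin (g + 1)) (Fin (g + 1)) ℂ) + todaLax g I V y).det =
          y ^ 2 +
            y * (x ^ (g + 1) +
              ∑ k : Fin (g + 1),
                MvPolynomial.aeval (Sum.elim I V) (p k) * x ^ (k : ℕ)) +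
            ∏ i, I i * V i  := by
  obtain ⟨n, rfl⟩ : ∃ n, g = n + 1 := ⟨g - 1, by omega⟩
  refine ⟨fun k => (todaSpectralPoly (n + 2)).coeff k, fun I V x y hy => ?_⟩
  have hQ := (isMonicOfDegree_todaSpectralPoly (n + 1)).eval₂_eq
    (MvPolynomial.aeval (R := ℕ) (Sum.elim I V)).toRingHom x
  rw [eval₂_todaSpectralPoly] at hQ
  simp only [AlgHom.toRingHom_eq_coe, RingHom.coe_coe] at hQ
  rw [det_smul_one_add_todaLax n I V x hy, ← hQ]
  field_simp
  ring
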